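/- arXiv:1902.10582 — 5 statements merged into one kernel-verified Lean document; each statement's English description precedes it below -/
import Mathlib

section
/- Let W = (w_{ij}) ∈ ℝ^{n×n} be a real symmetric positive definite matrix and let S ⊆ {1,…,n} be nonempty. Then w̃(S) ≤ (|S|−1) · (λ_max(W)/λ_min(W)) · χ_S^T W χ_S, where w̃(S) = Σ_{{i,j}⊆S, i≠j} (w_{ij} + w_{ii} + w_{jj}) is the modified weight sum over unordered pairs of distinct elements of S. -/
/-
With D = Σ_{i∈S} w_ii and Q = χ_Sᵀ W χ_S, counting how often each entry occurs gives
w̃(S) = (Q − D)/2 + (|S| − 1) D. The Rayleigh bounds λ_min ≤ W ≤ λ_max (in the Loewner order)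
give Q ≤ λ_max |S|, w_ii ≤ λ_max and λ_min |S| ≤ Q. For |S| ≥ 2 the first two yield
w̃(S) ≤ |S| (|S| − 1) λ_max, and the third turns this into the claimed bound; for |S| = 1 both
sides vanish.
-/

open Matrix Finset

/-- χ_S^T W χ_S = Σ_{i∈S} Σ_{j∈S} w_{ij}. -/
noncomputable def quadForm {n : ℕ} (W : Matrix (Fin n) (Fin n) ℝ) (S : Finset (Fin n)) : ℝ :=
  ∑ i ∈ S, ∑ j ∈ S, W i j

/-- Sum of `f i j` over unordered pairs {i,j} ⊆ S with i ≠ j (for symmetric `f`). -/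
noncomputable def pairSum {n : ℕ} (f : Fin n → Fin n → ℝ) (S : Finset (Fin n)) : ℝ :=
  (∑ p ∈ S.offDiag, f p.1 p.2) / 2

/-- w̃(S) = Σ_{{i,j}⊆S, i≠j} (w_{ij} + w_{ii} + w_{jj}). -/
noncomputable def modWeight {n : ℕ} (W : Matrix (Fin n) (Fin n) ℝ) (S : Finset (Fin n)) : ℝ :=
  pairSum (fun i j => W i j + W i i + W j j) S

/-- Smallest eigenvalue of a real symmetric matrix. -/
noncomputable def lamMin {n : ℕ} {W : Matrix (Fin n) (Fin n) ℝ} (hW : W.IsHermitian) : ℝ :=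
  ⨅ i, hW.eigenvalues i

/-- Largest eigenvalue of a real symmetric matrix. -/
noncomputable def lamMax {n : ℕ} {W : Matrix (Fin n) (Fin n) ℝ} (hW : W.IsHermitian) : ℝ :=
  ⨆ i, hW.eigenvalues i

open scoped MatrixOrder

lemma Finset.sum_offDiag {α M : Type*} [DecidableEq α] [AddCommGroup M] (s : Finset α)
    (f : α → α → M) :
    ∑ p ∈ s.offDiag, f p.1 p.2 = ∑ i ∈ s, ∑ j ∈ s, f i j - ∑ i ∈ s, f i i := by
  rw [eq_sub_iff_add_eq', ← Finset.sum_diag s (fun p => f p.1 p.2), ← Finset.sum_union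
    (disjoint_diag_offDiag s), diag_union_offDiag, Finset.sum_product]

section

variable {n : ℕ}

lemma quadForm_eq_dotProduct (W : Matrix (Fin n) (Fin n) ℝ) (S : Finset (Fin n)) :
    quadForm W S = (S : Set (Fin n)).indicator 1 ⬝ᵥ W *ᵥ (S : Set (Fin n)).indicator 1 := by
  simp [quadForm, dotProduct, mulVec, Set.indicator_apply, Finset.sum_ite_mem]

lemma indicator_dotProduct_self (S : Finset (Fin n)) :
    (S : Set (Fin n)).indicator (1 : Fin n → ℝ) ⬝ᵥ (S : Set (Fin n)).indicator 1 = #S := by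
  simp [dotProduct, Set.indicator_apply, Finset.sum_ite_mem]

lemma modWeight_eq (W : Matrix (Fin n) (Fin n) ℝ) (S : Finset (Fin n)) :
    modWeight W S = (quadForm W S - ∑ i ∈ S, W i i) / 2 + (#S - 1) * ∑ i ∈ S, W i i := by
  rw [modWeight, pairSum, Finset.sum_add_distrib, Finset.sum_add_distrib,
    Finset.sum_offDiag S (fun i j => W i j), Finset.sum_offDiag S (fun i _ => W i i),
    Finset.sum_offDiag S (fun _ j => W j j)]
  simp only [Finset.sum_const, nsmul_eq_mul, ← Finset.mul_sum, quadForm]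
  ring

lemma modWeight_eq_zero_of_card_le_one (W : Matrix (Fin n) (Fin n) ℝ) {S : Finset (Fin n)}
    (hS : #S ≤ 1) : modWeight W S = 0 := by
  have : S.offDiag = ∅ := by
    rw [← Finset.card_eq_zero, Finset.offDiag_card]
    exact Nat.sub_eq_zero_of_le (mul_le_of_le_one_left (Nat.zero_le _) hS)
  simp [modWeight, pairSum, this]

end

namespace Matrix.IsHermitian

variable {n : ℕ} {W : Matrix (Fin n) (Fin n) ℝ}

lemma lamMin_le_eigenvalues (hW : W.IsHermitian) (i : Fin n) : lamMin hW ≤ hW.eigenvalues i :=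
  ciInf_le (Set.finite_range _).bddBelow i

lemma eigenvalues_le_lamMax (hW : W.IsHermitian) (i : Fin n) : hW.eigenvalues i ≤ lamMax hW :=
  le_ciSup (Set.finite_range _).bddAbove i

lemma lamMin_le_lamMax [Nonempty (Fin n)] (hW : W.IsHermitian) : lamMin hW ≤ lamMax hW :=
  (hW.lamMin_le_eigenvalues (Classical.arbitrary _)).trans (hW.eigenvalues_le_lamMax _)

lemma lamMin_mul_dotProduct_le (hW : W.IsHermitian) (x : Fin n → ℝ) :
    lamMin hW * (x ⬝ᵥ x) ≤ x ⬝ᵥ W *ᵥ x := by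
  have hle : algebraMap ℝ _ (lamMin hW) ≤ W := by
    rw [algebraMap_le_iff_le_spectrum, hW.spectrum_real_eq_range_eigenvalues]
    rintro _ ⟨i, rfl⟩
    exact hW.lamMin_le_eigenvalues i
  simpa [sub_mulVec, dotProduct_sub, Algebra.algebraMap_eq_smul_one, smul_mulVec] using
    (Matrix.le_iff.1 hle).dotProduct_mulVec_nonneg x

lemma dotProduct_mulVec_le_lamMax_mul (hW : W.IsHermitian) (x : Fin n → ℝ) :
    x ⬝ᵥ W *ᵥ x ≤ lamMax hW * (x ⬝ᵥ x) := by
  have hle : W ≤ algebraMap ℝ _ (lamMax hW) := by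
    rw [le_algebraMap_iff_spectrum_le, hW.spectrum_real_eq_range_eigenvalues]
    rintro _ ⟨i, rfl⟩
    exact hW.eigenvalues_le_lamMax i
  simpa [sub_mulVec, dotProduct_sub, Algebra.algebraMap_eq_smul_one, smul_mulVec] using
    (Matrix.le_iff.1 hle).dotProduct_mulVec_nonneg x

lemma diag_le_lamMax (hW : W.IsHermitian) (i : Fin n) : W i i ≤ lamMax hW := by
  simpa [mulVec_single, single_dotProduct] using hW.dotProduct_mulVec_le_lamMax_mul (Pi.single i 1)

lemma lamMin_mul_card_le_quadForm (hW : W.IsHermitian) (S : Finset (Fin n)) :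
    lamMin hW * #S ≤ quadForm W S := by
  simpa [quadForm_eq_dotProduct, indicator_dotProduct_self] using
    hW.lamMin_mul_dotProduct_le ((S : Set (Fin n)).indicator 1)

lemma quadForm_le_lamMax_mul_card (hW : W.IsHermitian) (S : Finset (Fin n)) :
    quadForm W S ≤ lamMax hW * #S := by
  simpa [quadForm_eq_dotProduct, indicator_dotProduct_self] using
    hW.dotProduct_mulVec_le_lamMax_mul ((S : Set (Fin n)).indicator 1)

lemma modWeight_le (hW : W.IsHermitian) (S : Finset (Fin n)) :
    modWeight W S ≤ #S * (#S - 1) * lamMax hW := by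
  rcases le_or_gt #S 1 with hS | hS
  · rw [modWeight_eq_zero_of_card_le_one W hS]
    interval_cases #S <;> simp
  have hc : (3 / 2 : ℝ) ≤ #S := by
    have : (2 : ℝ) ≤ #S := by exact_mod_cast hS
    linarith
  have hD : ∑ i ∈ S, W i i ≤ #S * lamMax hW := by
    simpa using Finset.sum_le_sum fun i (_ : i ∈ S) => hW.diag_le_lamMax i
  have hQ := hW.quadForm_le_lamMax_mul_card S
  rw [modWeight_eq]
  linarith [mul_le_mul_of_nonneg_left hD (sub_nonneg.2 hc)]

end Matrix.IsHermitian

lemma Matrix.PosDef.lamMin_pos {n : ℕ} [Nonempty (Fin n)] {W : Matrix (Fin n) (Fin n) ℝ}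
    (hW : W.PosDef) : 0 < lamMin hW.1 := by
  obtain ⟨i, hi⟩ := exists_eq_ciInf_of_finite (f := hW.1.eigenvalues)
  rw [lamMin, ← hi]
  exact hW.eigenvalues_pos i

theorem stmt3 {n : ℕ} (W : Matrix (Fin n) (Fin n) ℝ) (hW : W.PosDef)
    (S : Finset (Fin n)) (hS : S.Nonempty) :
    modWeight W S ≤ ((S.card : ℝ) - 1) * (lamMax hW.1 / lamMin hW.1) * quadForm W S := by
  have : Nonempty (Fin n) := ⟨hS.choose⟩
  have hmin := hW.lamMin_pos
  have hmax : 0 ≤ lamMax hW.1 := hmin.le.trans hW.1.lamMin_le_lamMax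
  have hc : (0 : ℝ) ≤ #S - 1 := by simpa using hS.card_pos
  calc modWeight W S ≤ #S * (#S - 1) * lamMax hW.1 := hW.1.modWeight_le S
    _ = (#S - 1) * (lamMax hW.1 / lamMin hW.1) * (lamMin hW.1 * #S) := by field_simp
    _ ≤ _ := by gcongr; exact hW.1.lamMin_mul_card_le_quadForm S
end

section
/- Let A ∈ ℝ^{n×n} be a real symmetric positive definite matrix, let 𝓜 be a nonempty finite family of subsets of {1,…,n}, let θ, θ̂ ∈ ℝ^n, let C ≥ 0, ε ≥ 0, and α ∈ (0,1]. For M ∈ 𝓜 write θ(M) = Σ_{e∈M} θ_e and θ̂(M) = Σ_{e∈M} θ̂_e. Suppose: (i) for every M ∈ 𝓜, |θ(M) − θ̂(M)| ≤ C‖χ_M‖_{A^{-1}}; (ii) M̂ ∈ 𝓜 maximizes θ̂ over 𝓜; (iii) Z ∈ ℝ satisfies Z ≥ α · max_{M∈𝓜} ‖χ_M‖_{A^{-1}}; and (iv) the stopping condition θ̂(M̂) − C‖χ_{M̂}‖_{A^{-1}} ≥ θ̂(M) + (C/α)·Z − ε holds for every M ∈ 𝓜 with M ≠ M̂. Then θ(M)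 − θ(M̂) ≤ ε for every M ∈ 𝓜; in particular the output M̂ is ε-optimal. -/
open Matrix Finset

/-- Indicator vector χ_M of a subset M ⊆ {1,…,n}. -/
noncomputable def chiV {n : ℕ} (M : Finset (Fin n)) : Fin n → ℝ :=
  fun i => if i ∈ M then 1 else 0

/-- ‖χ_M‖_{A⁻¹} = √(χ_M^T A⁻¹ χ_M). -/
noncomputable def normAinv {n : ℕ} (A : Matrix (Fin n) (Fin n) ℝ) (M : Finset (Fin n)) : ℝ :=
  Real.sqrt (chiV M ⬝ᵥ (A⁻¹ *ᵥ chiV M))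

theorem stmt8 {n : ℕ} (A : Matrix (Fin n) (Fin n) ℝ) (hA : A.PosDef)
    (𝓜 : Finset (Finset (Fin n))) (h𝓜 : 𝓜.Nonempty)
    (θ θh : Fin n → ℝ) (C ε α : ℝ) (hC : 0 ≤ C) (hε : 0 ≤ ε) (hα0 : 0 < α) (hα1 : α ≤ 1)
    (Mh : Finset (Fin n)) (hMh : Mh ∈ 𝓜)
    -- (i) confidence-ellipsoid event
    (hconf : ∀ M ∈ 𝓜, |(∑ e ∈ M, θ e) - ∑ e ∈ M, θh e| ≤ C * normAinv A M)
    -- (ii) Mh maximizes θ̂ over 𝓜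
    (hemp : ∀ M ∈ 𝓜, (∑ e ∈ M, θh e) ≤ ∑ e ∈ Mh, θh e)
    -- (iii) Z is an α-approximate value of the confidence ellipsoid maximization
    (Z : ℝ) (hZ : α * 𝓜.sup' h𝓜 (normAinv A) ≤ Z)
    -- (iv) the stopping condition
    (hstop : ∀ M ∈ 𝓜, M ≠ Mh →
      (∑ e ∈ Mh, θh e) - C * normAinv A Mh ≥ (∑ e ∈ M, θh e) + (C / α) * Z - ε) :
    ∀ M ∈ 𝓜, (∑ e ∈ M, θ e) - (∑ e ∈ Mh, θ e) ≤ ε := by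
  intro M hM
  by_cases hne : M = Mh
  · simp [hne, hε]
  · have h1 := hconf M hM
    have h2 := hconf Mh hMh
    have hsup : normAinv A M ≤ 𝓜.sup' h𝓜 (normAinv A) := Finset.le_sup' _ hM
    have hMZ : normAinv A M ≤ Z / α := by
      rw [le_div_iff₀ hα0]
      calc normAinv A M * α = α * normAinv A M := mul_comm _ _
        _ ≤ α * 𝓜.sup' h𝓜 (normAinv A) := by
            exact mul_le_mul_of_nonneg_left hsup hα0.le
        _ ≤ Z := hZ
    have hCM : C * normAinv A M ≤ (C / α) * Z := by
      calc C * normAinv A M ≤ C * (Z / α) := mul_le_mul_of_nonneg_left hMZ hC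
        _ = (C / α) * Z := by ring
    have hs := hstop M hM hne
    have ha := abs_le.mp h1
    have hb := abs_le.mp h2
    linarith [ha.1, ha.2, hb.1, hb.2]
end

section
/- Let A ∈ ℝ^{n×n} be a real symmetric positive definite matrix, let 𝓜 be a nonempty finite family of subsets of {1,…,n}, let θ, θ̂ ∈ ℝ^n, let C ≥ 0, ε ≥ 0, α ∈ (0,1], ρ ≥ 0 and t > 0. For M ∈ 𝓜 write θ(M) = Σ_{e∈M} θ_e and θ̂(M) = Σ_{e∈M} θ̂_e. Suppose: (i) ‖χ_M‖_{A^{-1}} ≤ √(ρ/t) for every M ∈ 𝓜; (ii) |θ(M) − θ̂(M)| ≤ C‖χ_M‖_{A^{-1}} for every M ∈ 𝓜; (iii) M* ∈ 𝓜 is the unique maximizer of θ over 𝓜 and Δ_min = min_{M∈𝓜, M≠M*} (θ(M*) − θ(M)); (iv) Z ∈ ℝ satisfies 0 ≤ Z ≤ max_{M∈𝓜} ‖χ_M‖_{A^{-1}}. If Δ_min + ε ≥ (3 + 1/α)·C·√(ρ/t), then the stopping condition holds at M*, i.e., θ̂(M*) − C‖χ_{M*}‖_{A^{-1}} ≥ θ̂(M)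 + (C/α)·Z − ε for every M ∈ 𝓜 with M ≠ M*. -/
open Matrix Finset

theorem stmt9 {n : ℕ} (A : Matrix (Fin n) (Fin n) ℝ) (hA : A.PosDef)
    (𝓜 : Finset (Finset (Fin n))) (h𝓜 : 𝓜.Nonempty)
    (θ θh : Fin n → ℝ) (C ε α ρ t : ℝ) (hC : 0 ≤ C) (hε : 0 ≤ ε)
    (hα0 : 0 < α) (hα1 : α ≤ 1) (hρ : 0 ≤ ρ) (ht : 0 < t)
    -- (i) the norms are uniformly bounded by √(ρ/t)
    (hnorm : ∀ M ∈ 𝓜, normAinv A M ≤ Real.sqrt (ρ / t))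
    -- (ii) confidence-ellipsoid event
    (hconf : ∀ M ∈ 𝓜, |(∑ e ∈ M, θ e) - ∑ e ∈ M, θh e| ≤ C * normAinv A M)
    -- (iii) Mstar is the unique maximizer of θ over 𝓜, with gap Δmin
    (Mstar : Finset (Fin n)) (hMstar : Mstar ∈ 𝓜)
    (hopt : ∀ M ∈ 𝓜, M ≠ Mstar → (∑ e ∈ M, θ e) < ∑ e ∈ Mstar, θ e)
    (Δmin : ℝ)
    (hΔ : Δmin = sInf ↑((𝓜.erase Mstar).image fun M =>
      (∑ e ∈ Mstar, θ e) - ∑ e ∈ M, θ e))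
    -- (iv) 0 ≤ Z ≤ max_{M∈𝓜} ‖χ_M‖_{A⁻¹}
    (Z : ℝ) (hZ0 : 0 ≤ Z) (hZ : Z ≤ 𝓜.sup' h𝓜 (normAinv A))
    -- the sample-size condition
    (hcond : (3 + 1 / α) * C * Real.sqrt (ρ / t) ≤ Δmin + ε) :
    ∀ M ∈ 𝓜, M ≠ Mstar →
      (∑ e ∈ Mstar, θh e) - C * normAinv A Mstar ≥ (∑ e ∈ M, θh e) + (C / α) * Z - ε := by
  intro M hM hMne
  set s := Real.sqrt (ρ / t) with hsdef
  have hs0 : 0 ≤ s := Real.sqrt_nonneg _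
  have hΔle : Δmin ≤ (∑ e ∈ Mstar, θ e) - ∑ e ∈ M, θ e := by
    rw [hΔ]
    apply csInf_le ((Finset.finite_toSet _).bddBelow)
    simp only [Finset.coe_image, Set.mem_image, Finset.mem_coe]
    exact ⟨M, Finset.mem_erase.mpr ⟨hMne, hM⟩, rfl⟩
  have hZs : Z ≤ s := le_trans hZ (Finset.sup'_le _ _ fun N hN => hnorm N hN)
  have hrM : normAinv A M ≤ s := hnorm M hM
  have hrM0 : 0 ≤ normAinv A M := Real.sqrt_nonneg _
  have hrMs : normAinv A Mstar ≤ s := hnorm Mstar hMstar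
  have h1 : (∑ e ∈ M, θh e) - ∑ e ∈ M, θ e ≤ C * normAinv A M := by
    have := abs_le.mp (hconf M hM); linarith [this.1]
  have h2 : (∑ e ∈ Mstar, θ e) - ∑ e ∈ Mstar, θh e ≤ C * normAinv A Mstar := by
    have := abs_le.mp (hconf Mstar hMstar); linarith [this.2]
  have hCα : 0 ≤ C / α := div_nonneg hC hα0.le
  have h3 : C * normAinv A M ≤ C * s := mul_le_mul_of_nonneg_left hrM hC
  have h4 : C * normAinv A Mstar ≤ C * s := mul_le_mul_of_nonneg_left hrMs hC
  have h5 : (C / α) * Z ≤ (C / α) * s := mul_le_mul_of_nonneg_left hZs hCα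
  have e1 : (3 + 1 / α) * C * s = 3 * (C * s) + (C / α) * s := by ring
  linarith
end

section
/- Let 𝓜 be a nonempty finite family of subsets of {1,…,n}, let θ, θ̂ ∈ ℝ^n, let c ∈ ℝ^n with c_i ≥ 0 for all i, and let ε > 0. For M ∈ 𝓜 write θ(M) = Σ_{e∈M} θ_e and θ̂(M) = Σ_{e∈M} θ̂_e, and for M, M' ∈ 𝓜 write g(M, M') = Σ_{i=1}^n |χ_M(i) − χ_{M'}(i)| c_i. Suppose: (i) for all M, M' ∈ 𝓜, |(θ̂(M) − θ̂(M')) − (θ(M) − θ(M'))| ≤ g(M, M'); (ii) M̂ ∈ 𝓜 maximizes θ̂ over 𝓜; and (iii) the stopping condition max_{M∈𝓜, M≠M̂} (θ̂(M) + g(M, M̂)) − θ̂(M̂) < ε holds. Then θ(M) − θ(M̂) ≤ ε for every M ∈ 𝓜; in particular the output M̂ is ε-optimal. -/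
open Finset

/-- g(M, M') = Σ_{i=1}^n |χ_M(i) − χ_{M'}(i)| c_i. -/
noncomputable def gapWidth {n : ℕ} (c : Fin n → ℝ) (M M' : Finset (Fin n)) : ℝ :=
  ∑ i, |chiV M i - chiV M' i| * c i

theorem stmt10 {n : ℕ} (𝓜 : Finset (Finset (Fin n))) (h𝓜 : 𝓜.Nonempty)
    (θ θh : Fin n → ℝ) (c : Fin n → ℝ) (hc : ∀ i, 0 ≤ c i) (ε : ℝ) (hε : 0 < ε)
    (Mh : Finset (Fin n)) (hMh : Mh ∈ 𝓜)
    -- (i) independent-confidence-bound event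
    (hconf : ∀ M ∈ 𝓜, ∀ M' ∈ 𝓜,
      |((∑ e ∈ M, θh e) - ∑ e ∈ M', θh e) - ((∑ e ∈ M, θ e) - ∑ e ∈ M', θ e)|
        ≤ gapWidth c M M')
    -- (ii) Mh maximizes θ̂ over 𝓜
    (hemp : ∀ M ∈ 𝓜, (∑ e ∈ M, θh e) ≤ ∑ e ∈ Mh, θh e)
    -- (iii) the stopping condition
    (hstop : ∀ M ∈ 𝓜, M ≠ Mh →
      ((∑ e ∈ M, θh e) + gapWidth c M Mh) - (∑ e ∈ Mh, θh e) < ε) :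
    ∀ M ∈ 𝓜, (∑ e ∈ M, θ e) - (∑ e ∈ Mh, θ e) ≤ ε := by
  intro M hM
  rcases eq_or_ne M Mh with rfl | hne
  · simp; linarith
  · have h1 := hconf M hM Mh hMh
    have h2 := hstop M hM hne
    have := abs_le.mp h1
    linarith [this.2]
end

section
/- Let 𝓜 be a nonempty finite family of subsets of {1,…,n}, let θ, θ̂ ∈ ℝ^n, let c ∈ ℝ^n with c_i ≥ 0 for all i, let ε ≥ 0 and B ≥ 0. For M ∈ 𝓜 write θ(M) = Σ_{e∈M} θ_e and θ̂(M) = Σ_{e∈M} θ̂_e, and for M, M' ∈ 𝓜 write g(M, M') = Σ_{i=1}^n |χ_M(i) − χ_{M'}(i)| c_i. Suppose: (i) g(M, M') ≤ B for all M, M' ∈ 𝓜; (ii) |(θ̂(M) − θ̂(M')) − (θ(M) − θ(M'))| ≤ g(M, M') for all M, M' ∈ 𝓜; (iii) M* ∈ 𝓜 is the unique maximizer of θ over 𝓜 and Δ_min = min_{M∈𝓜, M≠M*} (θ(M*) − θ(M)). If Δ_min + ε > 2B, then ε > max_{M∈𝓜, M≠M*} (θ̂(M) + g(M, M*)) − θ̂(M*),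 i.e., the ICB stopping condition is satisfied at M*. -/
open Finset

theorem stmt11 {n : ℕ} (𝓜 : Finset (Finset (Fin n))) (h𝓜 : 𝓜.Nonempty)
    (θ θh : Fin n → ℝ) (c : Fin n → ℝ) (hc : ∀ i, 0 ≤ c i)
    (ε B : ℝ) (hε : 0 ≤ ε) (hB : 0 ≤ B)
    -- (i) uniform bound on the confidence widths
    (hgB : ∀ M ∈ 𝓜, ∀ M' ∈ 𝓜, gapWidth c M M' ≤ B)
    -- (ii) independent-confidence-bound event
    (hconf : ∀ M ∈ 𝓜, ∀ M' ∈ 𝓜,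
      |((∑ e ∈ M, θh e) - ∑ e ∈ M', θh e) - ((∑ e ∈ M, θ e) - ∑ e ∈ M', θ e)|
        ≤ gapWidth c M M')
    -- (iii) Mstar is the unique maximizer of θ over 𝓜, with gap Δmin
    (Mstar : Finset (Fin n)) (hMstar : Mstar ∈ 𝓜)
    (hopt : ∀ M ∈ 𝓜, M ≠ Mstar → (∑ e ∈ M, θ e) < ∑ e ∈ Mstar, θ e)
    (Δmin : ℝ)
    (hΔ : Δmin = sInf ↑((𝓜.erase Mstar).image fun M =>
      (∑ e ∈ Mstar, θ e) - ∑ e ∈ M, θ e))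
    -- the sample-size condition
    (hcond : 2 * B < Δmin + ε) :
    ∀ M ∈ 𝓜, M ≠ Mstar →
      ((∑ e ∈ M, θh e) + gapWidth c M Mstar) - (∑ e ∈ Mstar, θh e) < ε := by
  intro M hM hne
  have hΔle : Δmin ≤ (∑ e ∈ Mstar, θ e) - ∑ e ∈ M, θ e := by
    rw [hΔ]
    apply csInf_le (Finset.bddBelow _)
    exact_mod_cast Finset.mem_image_of_mem _ (Finset.mem_erase.mpr ⟨hne, hM⟩)
  have h1 := hconf M hM Mstar hMstar
  have h2 := hgB M hM Mstar hMstar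
  have := abs_le.mp h1
  linarith [this.2]
end
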